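/- arXiv:1102.1590 — 6 statements merged into one kernel-verified Lean document; each statement's English description precedes it below -/
import Mathlib

section
/- Let Σ be an s×m real matrix and let Ψ(x) = (x^{y_1}, ..., x^{y_m}) be a vector of monomials in variables x_1,...,x_s. Suppose there is a partition I_1,...,I_d of {1,...,m} and a basis b^1,...,b^d of ker(Σ) with supp(b^j) = I_j. Then the ideal generated by the s entries of Σ·Ψ(x) in ℝ[x_1,...,x_s] equals the ideal generated by the binomials b^j_{j1}·x^{y_{j2}} − b^j_{j2}·x^{y_{j1}} for all j1, j2 ∈ I_j and all 1 ≤ j ≤ d. -/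
/-!
Let `E : ℝ^m → ℝ[x]` be the linear map `v ↦ ∑ₖ vₖ x^{yₖ}`. The left ideal is generated by
the images under `E` of the rows of `Σ`, the right one by the images of the vectors
`b^j_{j1} e_{j2} - b^j_{j2} e_{j1}`, and an ideal generated by `E '' S` only depends on the
span of `S`. Both spans equal `(ker Σ)^⊥`: for the rows this is finite-dimensional duality,
and a vector `u ⊥ b^j` for all `j` splits along the partition into blocks, each of which, for
a fixed `t ∈ I_j`, is `∑_{k ∈ I_j} (u_k / b^j_t) (b^j_t e_k - b^j_k e_t)` because
`∑_{k ∈ I_j} u_k b^j_k = 0`.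
-/

open MvPolynomial Function
open scoped Matrix

section Binomial

variable {K : Type*} [Field K] {ι : Type*} [DecidableEq ι]

def binomialVec (b : ι → K) (j1 j2 : ι) : ι → K :=
  Pi.single j2 (b j1) - Pi.single j1 (b j2)

theorem binomialVec_dotProduct [Fintype ι] (b v : ι → K) (j1 j2 : ι) :
    binomialVec b j1 j2 ⬝ᵥ v = b j1 * v j2 - b j2 * v j1 := by
  simp only [binomialVec, sub_dotProduct, single_dotProduct]

theorem Fintype.linearCombination_binomialVec {M : Type*} [AddCommGroup M] [Module K M]
    [Fintype ι] (Ψ : ι → M) (b : ι → K) (j1 j2 : ι) :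
    Fintype.linearCombination K Ψ (binomialVec b j1 j2) = b j1 • Ψ j2 - b j2 • Ψ j1 := by
  simp only [binomialVec, map_sub, Fintype.linearCombination_apply_single]

theorem sum_single_mem_of_forall_binomialVec_mem {b u : ι → K} {T : Finset ι}
    (hb : ∀ k ∈ T, b k ≠ 0) (hu : ∑ k ∈ T, u k * b k = 0) {W : Submodule K (ι → K)}
    (hW : ∀ j1 ∈ T, ∀ j2 ∈ T, binomialVec b j1 j2 ∈ W) :
    ∑ k ∈ T, Pi.single k (u k) ∈ W := by
  rcases T.eq_empty_or_nonempty with rfl | ⟨t, ht⟩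
  · simp
  have hsum : ∑ k ∈ T, Pi.single k (u k) = ∑ k ∈ T, (u k / b t) • binomialVec b t k := by
    ext i
    simp [binomialVec, Pi.single_apply, mul_sub, div_mul_eq_mul_div, ← Finset.sum_div, hu,
      div_mul_cancel₀ _ (hb t ht)]
  rw [hsum]
  exact Submodule.sum_mem _ fun k hk => Submodule.smul_mem _ _ (hW t ht k hk)

end Binomial

theorem Finset.sum_eq_sum_sum_of_partition {ι κ M : Type*} [Fintype ι] [Fintype κ]
    [DecidableEq ι] [AddCommMonoid M] {I : κ → Finset ι} (hDisj : Pairwise (Disjoint on I))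
    (hCover : ∀ i, ∃ j, i ∈ I j) (f : ι → M) :
    ∑ i, f i = ∑ j, ∑ i ∈ I j, f i := by
  have huniv : (Finset.univ : Finset ι) = Finset.univ.biUnion I := by
    ext i
    simpa using hCover i
  rw [huniv, Finset.sum_biUnion fun j _ j' _ hjj' => hDisj hjj']

theorem dotProduct_eq_sum_of_support_subset {K ι : Type*} [CommSemiring K] [Fintype ι]
    {u v : ι → K} {T : Finset ι} (hv : ∀ i, v i ≠ 0 → i ∈ T) :
    u ⬝ᵥ v = ∑ i ∈ T, u i * v i := by
  refine (Finset.sum_subset (Finset.subset_univ T) fun i _ hi => ?_).symm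
  rw [not_imp_comm.1 (hv i) hi, mul_zero]

theorem Matrix.mem_span_rows_iff {K m n : Type*} [Field K] [Fintype n] [DecidableEq n]
    (A : Matrix m n K) (u : n → K) :
    u ∈ Submodule.span K (Set.range A.row) ↔ ∀ v, A *ᵥ v = 0 → u ⬝ᵥ v = 0 := by
  set B := (1 : Matrix n n K).toBilin'
  have hB : ∀ v w, B v w = v ⬝ᵥ w := fun v w => by
    simp [B, Matrix.toBilin'_apply']
  have hnd : B.Nondegenerate :=
    (Matrix.nondegenerate_of_det_ne_zero (by simp)).toBilin'
  have hrefl : B.IsRefl := fun v w h => by rwa [hB, dotProduct_comm, ← hB]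
  have hker :
      B.orthogonal (Submodule.span K (Set.range A.row)) = LinearMap.ker A.mulVecLin := by
    ext v
    change Submodule.span K (Set.range A.row) ≤ LinearMap.ker (B.flip v) ↔ _
    rw [Submodule.span_le, Set.range_subset_iff, LinearMap.mem_ker, Matrix.mulVecLin_apply,
      funext_iff]
    simp only [SetLike.mem_coe, LinearMap.mem_ker]
    exact forall_congr' fun i => by rw [LinearMap.BilinForm.flip_apply, hB]; rfl
  rw [← LinearMap.BilinForm.orthogonal_orthogonal hnd hrefl (Submodule.span K (Set.range A.row)),
    hker]
  simp [LinearMap.BilinForm.mem_orthogonal_iff, hB, dotProduct_comm u]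

section Partition

variable {K ι κ : Type*} [Field K] [Fintype ι] [DecidableEq ι] {I : κ → Finset ι}
  {b : κ → ι → K}

variable (I b) in
def binomialVecs : Set (ι → K) :=
  {w | ∃ j j1 j2, j1 ∈ I j ∧ j2 ∈ I j ∧ w = binomialVec (b j) j1 j2}

theorem binomialVec_dotProduct_eq_zero (hDisj : Pairwise (Disjoint on I))
    (hsupp : ∀ j i, b j i ≠ 0 → i ∈ I j) {j : κ} {j1 j2 : ι} (h1 : j1 ∈ I j) (h2 : j2 ∈ I j)
    (j' : κ) : binomialVec (b j) j1 j2 ⬝ᵥ b j' = 0 := by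
  rw [binomialVec_dotProduct]
  obtain rfl | hjj' := eq_or_ne j j'
  · ring
  have hvanish : ∀ i ∈ I j, b j' i = 0 := fun i hi =>
    not_imp_comm.1 (hsupp j' i) (Finset.disjoint_left.1 (hDisj hjj') hi)
  rw [hvanish j1 h1, hvanish j2 h2, mul_zero, mul_zero, sub_zero]

theorem mem_span_binomialVecs_of_forall_dotProduct_eq_zero [Fintype κ]
    (hDisj : Pairwise (Disjoint on I)) (hCover : ∀ i, ∃ j, i ∈ I j)
    (hsupp : ∀ j i, b j i ≠ 0 ↔ i ∈ I j) {u : ι → K} (hu : ∀ j, u ⬝ᵥ b j = 0) :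
    u ∈ Submodule.span K (binomialVecs I b) := by
  rw [← Finset.univ_sum_single u, Finset.sum_eq_sum_sum_of_partition hDisj hCover]
  refine Submodule.sum_mem _ fun j _ =>
    sum_single_mem_of_forall_binomialVec_mem (fun i hi => (hsupp j i).2 hi) ?_ ?_
  · rw [← dotProduct_eq_sum_of_support_subset fun i => (hsupp j i).1]
    exact hu j
  · exact fun j1 h1 j2 h2 => Submodule.subset_span ⟨j, j1, j2, h1, h2, rfl⟩

theorem span_rows_eq_span_binomialVecs [Fintype κ] {m : Type*} (A : Matrix m ι K)
    (hDisj : Pairwise (Disjoint on I)) (hCover : ∀ i, ∃ j, i ∈ I j)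
    (hsupp : ∀ j i, b j i ≠ 0 ↔ i ∈ I j) (hker : ∀ j, A *ᵥ b j = 0)
    (hspan : ∀ v, A *ᵥ v = 0 → v ∈ Submodule.span K (Set.range b)) :
    Submodule.span K (Set.range A.row) = Submodule.span K (binomialVecs I b) := by
  refine le_antisymm (Submodule.span_le.2 ?_) (Submodule.span_le.2 ?_)
  · rintro _ ⟨i, rfl⟩
    exact mem_span_binomialVecs_of_forall_dotProduct_eq_zero hDisj hCover hsupp
      fun j => congrFun (hker j) i
  · rintro _ ⟨j, j1, j2, h1, h2, rfl⟩
    refine (A.mem_span_rows_iff _).2 fun v hv => ?_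
    have hb : Submodule.span K (Set.range b) ≤
        LinearMap.ker (dotProductBilin K K (binomialVec (b j) j1 j2)) := by
      rw [Submodule.span_le, Set.range_subset_iff]
      exact binomialVec_dotProduct_eq_zero hDisj (fun j i => (hsupp j i).1) h1 h2
    exact hb (hspan v hv)

end Partition

theorem Ideal.span_image_span {K A V : Type*} [CommSemiring K] [CommSemiring A] [Algebra K A]
    [AddCommMonoid V] [Module K V] (f : V →ₗ[K] A) (S : Set V) :
    Ideal.span (f '' Submodule.span K S) = Ideal.span (f '' S) := by
  rw [← Submodule.map_coe, ← Submodule.span_image, Ideal.span, Submodule.span_span_of_tower]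

theorem stmt0_general (s m d : ℕ) (Sig : Matrix (Fin s) (Fin m) ℝ)
    (y : Fin m → Fin s → ℕ)
    (I : Fin d → Finset (Fin m))
    (hDisj : ∀ j j', j ≠ j' → Disjoint (I j) (I j'))
    (hCover : ∀ i : Fin m, ∃ j, i ∈ I j)
    (b : Fin d → Fin m → ℝ)
    (hker : ∀ j, Sig.mulVec (b j) = 0)
    (hsupp : ∀ j i, b j i ≠ 0 ↔ i ∈ I j)
    (hspan : ∀ v : Fin m → ℝ, Sig.mulVec v = 0 →
      v ∈ Submodule.span ℝ (Set.range b)) :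
    Ideal.span (Set.range fun i : Fin s =>
        ∑ j : Fin m, C (Sig i j) * ∏ l : Fin s, X l ^ y j l) =
    Ideal.span { p : MvPolynomial (Fin s) ℝ | ∃ j j1 j2,
        j1 ∈ I j ∧ j2 ∈ I j ∧
        p = C (b j j1) * ∏ l : Fin s, X l ^ y j2 l
            - C (b j j2) * ∏ l : Fin s, X l ^ y j1 l } := by
  set E := Fintype.linearCombination ℝ
    fun k : Fin m => (∏ l : Fin s, X l ^ y k l : MvPolynomial (Fin s) ℝ)
  have hrows : (Set.range fun i : Fin s => ∑ j : Fin m, C (Sig i j) * ∏ l : Fin s, X l ^ y j l)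
      = E '' Set.range Sig.row := by
    rw [← Set.range_comp]
    congr 1
    funext i
    simp [E, Fintype.linearCombination_apply, smul_eq_C_mul]
  have hbinomials : { p : MvPolynomial (Fin s) ℝ | ∃ j j1 j2, j1 ∈ I j ∧ j2 ∈ I j ∧
      p = C (b j j1) * ∏ l : Fin s, X l ^ y j2 l - C (b j j2) * ∏ l : Fin s, X l ^ y j1 l }
      = E '' binomialVecs I b := by
    ext p
    simp [binomialVecs, E, Fintype.linearCombination_binomialVec, smul_eq_C_mul, eq_comm,
      and_assoc]
  rw [hrows, hbinomials, ← Ideal.span_image_span E, span_rows_eq_span_binomialVecs Sig hDisj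
    hCover hsupp hker hspan, Ideal.span_image_span]

/-- If ker(Σ) has a basis with disjoint supports partitioning the
columns, then the steady state ideal ⟨entries of Σ·Ψ(x)⟩ equals the ideal
generated by the binomials b^j_{j1}·x^{y_{j2}} − b^j_{j2}·x^{y_{j1}}. -/
theorem stmt0 (s m d : ℕ) (Sig : Matrix (Fin s) (Fin m) ℝ)
    (y : Fin m → Fin s → ℕ)
    (I : Fin d → Finset (Fin m))
    (hNonempty : ∀ j, (I j).Nonempty)
    (hDisj : ∀ j j', j ≠ j' → Disjoint (I j) (I j'))
    (hCover : ∀ i : Fin m, ∃ j, i ∈ I j)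
    (b : Fin d → Fin m → ℝ)
    (hker : ∀ j, Sig.mulVec (b j) = 0)
    (hsupp : ∀ j i, b j i ≠ 0 ↔ i ∈ I j)
    (hspan : ∀ v : Fin m → ℝ, Sig.mulVec v = 0 →
      v ∈ Submodule.span ℝ (Set.range b)) :
    Ideal.span (Set.range fun i : Fin s =>
        ∑ j : Fin m, C (Sig i j) * ∏ l : Fin s, X l ^ y j l) =
    Ideal.span { p : MvPolynomial (Fin s) ℝ | ∃ j j1 j2,
        j1 ∈ I j ∧ j2 ∈ I j ∧
        p = C (b j j1) * ∏ l : Fin s, X l ^ y j2 l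
            - C (b j j2) * ∏ l : Fin s, X l ^ y j1 l } :=
  stmt0_general s m d Sig y I hDisj hCover b hker hsupp hspan
end

section
/- Let Σ be an s×m real matrix admitting a partition I_1,...,I_d of {1,...,m} and a basis b^1,...,b^d of ker(Σ) with supp(b^j) = I_j. The vectors β^j_{j1,j2} := b^j_{j1} e_{j2} − b^j_{j2} e_{j1}, for j1, j2 ∈ I_j and 1 ≤ j ≤ d, span the orthogonal complement of ker(Σ) in ℝ^m. -/
/-!
Each `β^j_{j1,j2}` is orthogonal to every `b^{j'}`: for `j' = j` the two terms cancel, and for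
`j' ≠ j` both relevant coordinates of `b^{j'}` vanish since the supports are disjoint. As the `b^j`
span `ker Σ`, the span of the `β` lies in `(ker Σ)^⊥`.

Conversely, let `v ⊥ ker Σ`, so `v ⊥ b^j` for every `j`. Fixing `i₀ ∈ I_j`, the restriction of `v`
to `I_j` equals `∑_{i ∈ I_j} (v_i / b^j_{i₀}) β^j_{i₀,i}`: the `e_{i₀}`-component of this sum is
`-(∑_{i ∈ I_j} v_i b^j_i) / b^j_{i₀} = 0`. Summing over the blocks of the partition recovers `v`.
-/

open Finset Submodule

variable {ι : Type*} [Fintype ι]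

theorem Finset.sum_sum_eq_sum_of_partition [DecidableEq ι] {κ M : Type*} [Fintype κ]
    [AddCommMonoid M] (I : κ → Finset ι) (hDisj : ∀ j j', j ≠ j' → Disjoint (I j) (I j'))
    (hCover : ∀ i, ∃ j, i ∈ I j) (f : ι → M) :
    ∑ j, ∑ i ∈ I j, f i = ∑ i, f i := by
  rw [← sum_biUnion fun j _ j' _ h => hDisj j j' h]
  congr
  ext i
  simpa using hCover i

section CommRing

variable {R : Type*} [CommRing R]

theorem smul_single_sub_smul_single_dotProduct [DecidableEq ι] (c w : ι → R) (i k : ι) :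
    (c i • Pi.single k 1 - c k • Pi.single i 1) ⬝ᵥ w = c i * w k - c k * w i := by
  simp [sub_dotProduct, smul_dotProduct, single_dotProduct]

theorem dotProduct_eq_zero_of_mem_span {T U : Set (ι → R)}
    (hTU : ∀ t ∈ T, ∀ u ∈ U, t ⬝ᵥ u = 0) {v w : ι → R}
    (hv : v ∈ span R T) (hw : w ∈ span R U) : v ⬝ᵥ w = 0 := by
  induction hv using span_induction with
  | mem t ht =>
    induction hw using span_induction with
    | mem u hu => exact hTU t ht u hu
    | zero => simp
    | add x y _ _ hx hy => simp [dotProduct_add, hx, hy]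
    | smul a x _ hx => simp [dotProduct_smul, hx]
  | zero => simp
  | add x y _ _ hx hy => simp [add_dotProduct, hx, hy]
  | smul a x _ hx => simp [smul_dotProduct, hx]

end CommRing

theorem sum_single_mem_span_smul_single_sub [DecidableEq ι] {K : Type*} [Field K] {S : Finset ι}
    {c v : ι → K} (hc : ∀ i, c i ≠ 0 ↔ i ∈ S) (hv : v ⬝ᵥ c = 0) :
    ∑ i ∈ S, Pi.single i (v i) ∈
      span K {β | ∃ i k, i ∈ S ∧ k ∈ S ∧ β = c i • Pi.single k 1 - c k • Pi.single i 1} := by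
  rcases S.eq_empty_or_nonempty with rfl | ⟨i₀, hi₀⟩
  · simp
  have hc₀ : c i₀ ≠ 0 := (hc i₀).2 hi₀
  have hsum : ∑ i ∈ S, v i * c i = 0 := by
    rwa [sum_subset (subset_univ S) fun i _ hi => by simp [not_not.mp (mt (hc i).1 hi)]]
  have hexpand : ∑ i ∈ S, Pi.single i (v i) =
      ∑ i ∈ S, (v i / c i₀) • (c i₀ • Pi.single i 1 - c i • Pi.single i₀ 1) := by
    simp only [smul_sub, smul_smul, sum_sub_distrib, ← sum_smul, div_mul_cancel₀ _ hc₀,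
      div_mul_eq_mul_div, ← sum_div, hsum, zero_div, zero_smul, sub_zero]
    exact sum_congr rfl fun i _ => by rw [← Pi.single_smul', smul_eq_mul, mul_one]
  rw [hexpand]
  exact sum_mem fun i hi => smul_mem _ _ (subset_span ⟨i₀, i, hi₀, hi, rfl⟩)

theorem stmt1_general (s m d : ℕ) (Sig : Matrix (Fin s) (Fin m) ℝ)
    (I : Fin d → Finset (Fin m))
    (hDisj : ∀ j j', j ≠ j' → Disjoint (I j) (I j'))
    (hCover : ∀ i : Fin m, ∃ j, i ∈ I j)
    (b : Fin d → Fin m → ℝ)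
    (hker : ∀ j, Sig.mulVec (b j) = 0)
    (hsupp : ∀ j i, b j i ≠ 0 ↔ i ∈ I j)
    (hspan : ∀ v : Fin m → ℝ, Sig.mulVec v = 0 →
      v ∈ Submodule.span ℝ (Set.range b)) :
    ∀ v : Fin m → ℝ,
      (v ∈ Submodule.span ℝ { β : Fin m → ℝ | ∃ j j1 j2,
          j1 ∈ I j ∧ j2 ∈ I j ∧
          β = b j j1 • (Pi.single j2 1 : Fin m → ℝ) - b j j2 • (Pi.single j1 1 : Fin m → ℝ) })
      ↔ (∀ w : Fin m → ℝ, Sig.mulVec w = 0 → dotProduct v w = 0) := by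
  have hvanish : ∀ j j', j ≠ j' → ∀ i ∈ I j, b j' i = 0 := fun j j' hjj' i hi =>
    not_not.mp fun h => disjoint_left.mp (hDisj j j' hjj') hi ((hsupp j' i).1 h)
  intro v
  constructor
  · intro hv w hw
    refine dotProduct_eq_zero_of_mem_span ?_ hv (hspan w hw)
    rintro _ ⟨j, j1, j2, h1, h2, rfl⟩ _ ⟨j', rfl⟩
    rw [smul_single_sub_smul_single_dotProduct]
    rcases eq_or_ne j j' with rfl | hjj'
    · ring
    · simp [hvanish j j' hjj' j1 h1, hvanish j j' hjj' j2 h2]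
  · intro hv
    rw [← univ_sum_single v, ← sum_sum_eq_sum_of_partition I hDisj hCover]
    refine sum_mem fun j _ =>
      span_mono ?_ (sum_single_mem_span_smul_single_sub (hsupp j) (hv _ (hker j)))
    rintro _ ⟨j1, j2, h1, h2, rfl⟩
    exact ⟨j, j1, j2, h1, h2, rfl⟩

/-- The vectors β^j_{j1,j2} = b^j_{j1} e_{j2} − b^j_{j2} e_{j1}
span the orthogonal complement of ker(Σ) in ℝ^m. -/
theorem stmt1 (s m d : ℕ) (Sig : Matrix (Fin s) (Fin m) ℝ)
    (I : Fin d → Finset (Fin m))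
    (hNonempty : ∀ j, (I j).Nonempty)
    (hDisj : ∀ j j', j ≠ j' → Disjoint (I j) (I j'))
    (hCover : ∀ i : Fin m, ∃ j, i ∈ I j)
    (b : Fin d → Fin m → ℝ)
    (hker : ∀ j, Sig.mulVec (b j) = 0)
    (hsupp : ∀ j i, b j i ≠ 0 ↔ i ∈ I j)
    (hspan : ∀ v : Fin m → ℝ, Sig.mulVec v = 0 →
      v ∈ Submodule.span ℝ (Set.range b)) :
    ∀ v : Fin m → ℝ,
      (v ∈ Submodule.span ℝ { β : Fin m → ℝ | ∃ j j1 j2,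
          j1 ∈ I j ∧ j2 ∈ I j ∧
          β = b j j1 • (Pi.single j2 1 : Fin m → ℝ) - b j j2 • (Pi.single j1 1 : Fin m → ℝ) })
      ↔ (∀ w : Fin m → ℝ, Sig.mulVec w = 0 → dotProduct v w = 0) :=
  stmt1_general s m d Sig I hDisj hCover b hker hsupp hspan
end

section
/- Consider the binomial system b^j_{j1} x^{y_{j2}} − b^j_{j2} x^{y_{j1}} = 0 (for all j1,j2 ∈ I_j, 1 ≤ j ≤ d) with y_i ∈ ℤ_{≥0}^s, where I_1,...,I_d is a partition of {1,...,m} and each b^j is supported on I_j. This system admits a solution x ∈ ℝ^s_{>0} if and only if (i) for every j the nonzero entries of b^j all have the same sign, and (ii) the row vector Θ with entries ln(b^j_{j1}/b^j_{j2}) is orthogonal to ker(Δ), where Δ is the matrix with columns (y_{j1}−y_{j2})^t. -/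
/-!
Substituting `x = exp c` turns the binomial for the pair `(j1, j2)` into the linear equation
`log (b j j1 / b j j2) = (y j1 - y j2) ⬝ c`, which can only hold when `b j j1` and `b j j2` have
the same sign. The resulting linear system `Δ c = Θ` is solvable iff `Θ` annihilates `ker Δᵀ`,
the Fredholm alternative, i.e. range of a dual map equals the annihilator of the kernel.
-/

open Finset Matrix Real

theorem Matrix.mem_range_mulVec_iff_forall_dotProduct_eq_zero {K n σ : Type*} [Field K]
    [Fintype n] [Fintype σ] (A : Matrix n σ K) (θ : n → K) :
    θ ∈ Set.range A.mulVec ↔ ∀ u, Aᵀ *ᵥ u = 0 → θ ⬝ᵥ u = 0 := by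
  classical
  constructor
  · rintro ⟨c, rfl⟩ u hu
    rw [dotProduct_comm, dotProduct_mulVec, ← mulVec_transpose, hu, zero_dotProduct]
  · intro h
    have hθ : dotProductBilin K K θ ∈ (LinearMap.ker Aᵀ.mulVecLin).dualAnnihilator :=
      (Submodule.mem_dualAnnihilator _).2 h
    obtain ⟨ψ, hψ⟩ := LinearMap.range_dualMap_eq_dualAnnihilator_ker Aᵀ.mulVecLin ▸ hθ
    refine ⟨fun l => ψ (Pi.single l 1), funext fun t => ?_⟩
    have hrow : ψ (A.row t) = θ t := by simpa using LinearMap.congr_fun hψ (Pi.single t 1)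
    rw [← hrow, pi_eq_sum_univ' (A.row t)]
    simp [mulVec, dotProduct]

theorem Real.exists_pos_iff_exists_exp {ι : Type*} (P : (ι → ℝ) → Prop) :
    (∃ x, (∀ l, 0 < x l) ∧ P x) ↔ ∃ c : ι → ℝ, P fun l => exp (c l) := by
  constructor
  · rintro ⟨x, hx, h⟩
    exact ⟨fun l => log (x l), by simpa only [exp_log (hx _)] using h⟩
  · rintro ⟨c, h⟩
    exact ⟨_, fun l => exp_pos (c l), h⟩

theorem Real.prod_exp_pow {ι : Type*} [Fintype ι] (c : ι → ℝ) (e : ι → ℕ) :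
    ∏ l, exp (c l) ^ e l = exp (∑ l, (e l : ℝ) * c l) := by
  simp only [exp_sum, ← exp_nat_mul]

theorem Real.mul_exp_sub_mul_exp_eq_zero_iff {a₁ a₂ : ℝ} (ha₁ : a₁ ≠ 0) (p q : ℝ) :
    a₁ * exp q - a₂ * exp p = 0 ↔ 0 < a₁ * a₂ ∧ log (a₁ / a₂) = p - q := by
  constructor
  · intro h
    have ha₂ : a₂ ≠ 0 := by
      rintro rfl
      simp_all [exp_ne_zero]
    have hdiv : a₁ / a₂ = exp (p - q) := by
      rw [exp_sub, div_eq_div_iff ha₂ (exp_ne_zero q)]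
      linarith
    refine ⟨?_, by rw [hdiv, log_exp]⟩
    exact mul_pos_iff.2 (div_pos_iff.1 (hdiv ▸ exp_pos (p - q)))
  · rintro ⟨hpos, hlog⟩
    have ha₂ : a₂ ≠ 0 := by rintro rfl; simp at hpos
    have hdiv : a₁ / a₂ = exp (p - q) := by
      rw [← hlog, exp_log (div_pos_iff.2 (mul_pos_iff.1 hpos))]
    rw [exp_sub, div_eq_div_iff ha₂ (exp_ne_zero q)] at hdiv
    linarith

theorem Real.binomial_exp_eq_zero_iff {ι : Type*} [Fintype ι] {a₁ a₂ : ℝ} (ha₁ : a₁ ≠ 0)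
    (c : ι → ℝ) (e₁ e₂ : ι → ℕ) :
    a₁ * ∏ l, exp (c l) ^ e₂ l - a₂ * ∏ l, exp (c l) ^ e₁ l = 0 ↔
      0 < a₁ * a₂ ∧ log (a₁ / a₂) = ∑ l, ((e₁ l : ℝ) - e₂ l) * c l := by
  simp only [prod_exp_pow, mul_exp_sub_mul_exp_eq_zero_iff ha₁, sub_mul, sum_sub_distrib]

theorem stmt6_general (s m d : ℕ) (y : Fin m → Fin s → ℕ)
    (I : Fin d → Finset (Fin m))
    (b : Fin d → Fin m → ℝ)
    (hsupp : ∀ j i, b j i ≠ 0 ↔ i ∈ I j) :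
    (∃ x : Fin s → ℝ, (∀ l, 0 < x l) ∧
      ∀ j j1 j2, j1 ∈ I j → j2 ∈ I j →
        b j j1 * ∏ l : Fin s, x l ^ y j2 l
          - b j j2 * ∏ l : Fin s, x l ^ y j1 l = 0) ↔
    ((∀ j, ∀ j1 ∈ I j, ∀ j2 ∈ I j, 0 < b j j1 * b j j2) ∧
      (∀ u : {t : Fin d × Fin m × Fin m // t.2.1 ∈ I t.1 ∧ t.2.2 ∈ I t.1} → ℝ,
        (∀ l : Fin s,
          (∑ t : {t : Fin d × Fin m × Fin m // t.2.1 ∈ I t.1 ∧ t.2.2 ∈ I t.1},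
            ((y t.1.2.1 l : ℝ) - (y t.1.2.2 l : ℝ)) * u t) = 0) →
        (∑ t : {t : Fin d × Fin m × Fin m // t.2.1 ∈ I t.1 ∧ t.2.2 ∈ I t.1},
          Real.log (b t.1.1 t.1.2.1 / b t.1.1 t.1.2.2) * u t) = 0)) := by
  let Δ : Matrix {t : Fin d × Fin m × Fin m // t.2.1 ∈ I t.1 ∧ t.2.2 ∈ I t.1} (Fin s) ℝ :=
    Matrix.of fun t l => (y t.1.2.1 l : ℝ) - y t.1.2.2 l
  let Θ : {t : Fin d × Fin m × Fin m // t.2.1 ∈ I t.1 ∧ t.2.2 ∈ I t.1} → ℝ :=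
    fun t => log (b t.1.1 t.1.2.1 / b t.1.1 t.1.2.2)
  have hsystem (c : Fin s → ℝ) :
      (∀ j j1 j2, j1 ∈ I j → j2 ∈ I j →
        b j j1 * ∏ l, exp (c l) ^ y j2 l - b j j2 * ∏ l, exp (c l) ^ y j1 l = 0) ↔
      (∀ j, ∀ j1 ∈ I j, ∀ j2 ∈ I j, 0 < b j j1 * b j j2) ∧ Δ *ᵥ c = Θ := by
    have hbinomial j j1 j2 (h1 : j1 ∈ I j) :=
      binomial_exp_eq_zero_iff (a₂ := b j j2) ((hsupp j j1).2 h1) c (y j1) (y j2)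
    simp only [funext_iff, Subtype.forall, Prod.forall]
    exact ⟨fun h => ⟨fun j j1 h1 j2 h2 => ((hbinomial j j1 j2 h1).1 (h j j1 j2 h1 h2)).1,
        fun j j1 j2 ⟨h1, h2⟩ => ((hbinomial j j1 j2 h1).1 (h j j1 j2 h1 h2)).2.symm⟩,
      fun ⟨hpos, hlog⟩ j j1 j2 h1 h2 =>
        (hbinomial j j1 j2 h1).2 ⟨hpos j j1 h1 j2 h2, (hlog j j1 j2 ⟨h1, h2⟩).symm⟩⟩
  rw [exists_pos_iff_exists_exp]
  simp only [hsystem, exists_and_left]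
  exact and_congr_right' <| (Δ.mem_range_mulVec_iff_forall_dotProduct_eq_zero Θ).trans <|
    forall_congr' fun u => imp_congr_left funext_iff

/-- The binomial system b^j_{j1} x^{y_{j2}} − b^j_{j2} x^{y_{j1}} = 0
admits a positive solution iff (i) each b^j has all nonzero entries of the same
sign and (ii) Θ = (ln(b^j_{j1}/b^j_{j2})) is orthogonal to ker(Δ), where Δ has
columns (y_{j1} − y_{j2}). -/
theorem stmt6 (s m d : ℕ) (y : Fin m → Fin s → ℕ)
    (I : Fin d → Finset (Fin m))
    (hNonempty : ∀ j, (I j).Nonempty)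
    (hDisj : ∀ j j', j ≠ j' → Disjoint (I j) (I j'))
    (hCover : ∀ i : Fin m, ∃ j, i ∈ I j)
    (b : Fin d → Fin m → ℝ)
    (hsupp : ∀ j i, b j i ≠ 0 ↔ i ∈ I j) :
    (∃ x : Fin s → ℝ, (∀ l, 0 < x l) ∧
      ∀ j j1 j2, j1 ∈ I j → j2 ∈ I j →
        b j j1 * ∏ l : Fin s, x l ^ y j2 l
          - b j j2 * ∏ l : Fin s, x l ^ y j1 l = 0) ↔
    ((∀ j, ∀ j1 ∈ I j, ∀ j2 ∈ I j, 0 < b j j1 * b j j2) ∧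
      (∀ u : {t : Fin d × Fin m × Fin m // t.2.1 ∈ I t.1 ∧ t.2.2 ∈ I t.1} → ℝ,
        (∀ l : Fin s,
          (∑ t : {t : Fin d × Fin m × Fin m // t.2.1 ∈ I t.1 ∧ t.2.2 ∈ I t.1},
            ((y t.1.2.1 l : ℝ) - (y t.1.2.2 l : ℝ)) * u t) = 0) →
        (∑ t : {t : Fin d × Fin m × Fin m // t.2.1 ∈ I t.1 ∧ t.2.2 ∈ I t.1},
          Real.log (b t.1.1 t.1.2.1 / b t.1.1 t.1.2.2) * u t) = 0)) :=
  stmt6_general s m d y I b hsupp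
end

section
/- Let x̃ ∈ ℝ^s_{>0} be a solution of the binomial system b^j_{j1} x^{y_{j2}} = b^j_{j2} x^{y_{j1}} (for all j1,j2 ∈ I_j, 1 ≤ j ≤ d), and let A ∈ ℤ^{w×s} be a matrix of rank w whose kernel equals the real span of all differences y_{j2} − y_{j1} (j1,j2 ∈ I_j). Then x ∈ ℝ^s_{>0} solves the binomial system if and only if x = (x̃_1 t^{A_1},..., x̃_s t^{A_s}) for some t ∈ ℝ^w_{>0}, where A_i is the i-th column of A and t^{A_i} = ∏_ℓ t_ℓ^{(A_i)_ℓ}. -/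
/-!
Write a positive `x` as `x̃ * exp v` coordinatewise. Since `x̃` solves the system and its
coefficients are nonzero, `x` solves it iff `v` is orthogonal to every difference
`y j2 - y j1`, hence to `ker A`; and `x` lies in the monomial orbit iff `v = Aᵀ (log t)` lies in
the row space of `A`. Over a field the row space is exactly the annihilator of the kernel.
-/

open Real Matrix

namespace Matrix

variable {m n : Type*} [Fintype m] [Fintype n]

theorem dotProduct_eq_zero_of_mem_span {R : Type*} [CommSemiring R] {S : Set (n → R)}
    {v u : n → R} (h : ∀ g ∈ S, v ⬝ᵥ g = 0) (hu : u ∈ Submodule.span R S) : v ⬝ᵥ u = 0 :=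
  (Submodule.span_le (p := LinearMap.ker (dotProductBilin R R v))).mpr h hu

variable {K : Type*} [Field K]

theorem exists_vecMul_eq_iff_forall_mulVec_eq_zero (B : Matrix m n K) (v : n → K) :
    (∃ c, c ᵥ* B = v) ↔ ∀ u, B *ᵥ u = 0 → v ⬝ᵥ u = 0 := by
  classical
  constructor
  · rintro ⟨c, rfl⟩ u hu
    rw [← dotProduct_mulVec, hu, dotProduct_zero]
  · intro h
    have hv : dotProductBilin K K v ∈ (LinearMap.ker B.mulVecLin).dualAnnihilator :=
      (Submodule.mem_dualAnnihilator _).mpr fun u hu => h u hu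
    rw [← LinearMap.range_dualMap_eq_dualAnnihilator_ker] at hv
    obtain ⟨ψ, hψ⟩ := hv
    refine ⟨fun i => ψ fun j => if i = j then 1 else 0, dotProduct_eq _ _ fun u => ?_⟩
    have hψu : ψ (B *ᵥ u) = v ⬝ᵥ u := LinearMap.congr_fun hψ u
    rw [← dotProduct_mulVec, ← hψu, ψ.pi_apply_eq_sum_univ, dotProduct_comm]
    rfl

theorem exists_vecMul_eq_iff_of_ker_eq_span (B : Matrix m n K) {S : Set (n → K)}
    (hB : ∀ u, B *ᵥ u = 0 ↔ u ∈ Submodule.span K S) (v : n → K) :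
    (∃ c, c ᵥ* B = v) ↔ ∀ g ∈ S, v ⬝ᵥ g = 0 := by
  rw [exists_vecMul_eq_iff_forall_mulVec_eq_zero]
  exact ⟨fun h g hg => h g ((hB g).mpr (Submodule.subset_span hg)),
    fun h u hu => dotProduct_eq_zero_of_mem_span h ((hB u).mp hu)⟩

end Matrix

section

variable {ι κ : Type*}

theorem prod_mul_exp_pow [Fintype ι] (a v : ι → ℝ) (n : ι → ℕ) :
    ∏ l, (a l * exp (v l)) ^ n l = (∏ l, a l ^ n l) * exp (v ⬝ᵥ fun l => (n l : ℝ)) := by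
  simp only [mul_pow, Finset.prod_mul_distrib, dotProduct, exp_sum, ← exp_nat_mul, mul_comm]

theorem prod_exp_zpow [Fintype κ] (c : κ → ℝ) (k : κ → ℤ) :
    ∏ ℓ, exp (c ℓ) ^ k ℓ = exp (∑ ℓ, c ℓ * k ℓ) := by
  simp only [← rpow_intCast, ← exp_mul, exp_sum]

theorem exists_pos_prod_zpow_eq_exp_iff [Fintype κ] (A : Matrix κ ι ℤ) (v : ι → ℝ) :
    (∃ t : κ → ℝ, (∀ ℓ, 0 < t ℓ) ∧ ∀ i, exp (v i) = ∏ ℓ, t ℓ ^ A ℓ i) ↔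
      ∃ c, c ᵥ* A.map (Int.cast : ℤ → ℝ) = v := by
  constructor
  · rintro ⟨t, ht, hv⟩
    refine ⟨fun ℓ => log (t ℓ), funext fun i => exp_injective ?_⟩
    calc exp (((fun ℓ => log (t ℓ)) ᵥ* A.map Int.cast) i)
        = ∏ ℓ, exp (log (t ℓ)) ^ A ℓ i := (prod_exp_zpow _ fun ℓ => A ℓ i).symm
      _ = exp (v i) := by simp only [exp_log (ht _), hv i]
  · rintro ⟨c, rfl⟩
    exact ⟨fun ℓ => exp (c ℓ), fun ℓ => exp_pos _, fun i => (prod_exp_zpow _ _).symm⟩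

end

theorem mul_mul_exp_eq_iff {b₁ b₂ q₁ q₂ : ℝ} (h : b₁ * q₂ = b₂ * q₁) (hne : b₁ * q₂ ≠ 0)
    (a₁ a₂ : ℝ) : b₁ * (q₂ * exp a₂) = b₂ * (q₁ * exp a₁) ↔ a₂ = a₁ := by
  rw [← mul_assoc, ← mul_assoc, ← h, mul_right_inj' hne, exp_eq_exp]

theorem stmt7_general (s m d w : ℕ) (y : Fin m → Fin s → ℕ)
    (I : Fin d → Finset (Fin m))
    (b : Fin d → Fin m → ℝ)
    (hsupp : ∀ j i, b j i ≠ 0 ↔ i ∈ I j)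
    (A : Matrix (Fin w) (Fin s) ℤ)
    (hkerA : ∀ v : Fin s → ℝ,
      (A.map (fun a : ℤ => (a : ℝ))).mulVec v = 0 ↔
      v ∈ Submodule.span ℝ { u : Fin s → ℝ | ∃ j j1 j2,
        j1 ∈ I j ∧ j2 ∈ I j ∧ u = fun l => (y j2 l : ℝ) - (y j1 l : ℝ) })
    (xt : Fin s → ℝ) (hxt : ∀ i, 0 < xt i)
    (hxtsol : ∀ j j1 j2, j1 ∈ I j → j2 ∈ I j →
      b j j1 * ∏ l : Fin s, xt l ^ y j2 l = b j j2 * ∏ l : Fin s, xt l ^ y j1 l) :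
    ∀ x : Fin s → ℝ, (∀ i, 0 < x i) →
      ((∀ j j1 j2, j1 ∈ I j → j2 ∈ I j →
          b j j1 * ∏ l : Fin s, x l ^ y j2 l
            = b j j2 * ∏ l : Fin s, x l ^ y j1 l) ↔
        ∃ t : Fin w → ℝ, (∀ ℓ, 0 < t ℓ) ∧
          ∀ i, x i = xt i * ∏ ℓ : Fin w, t ℓ ^ (A ℓ i)) := by
  intro x hx
  obtain ⟨v, rfl⟩ : ∃ v : Fin s → ℝ, x = fun i => xt i * exp (v i) :=
    ⟨fun i => log (x i / xt i), funext fun i => by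
      rw [exp_log (div_pos (hx i) (hxt i)), mul_div_cancel₀ _ (hxt i).ne']⟩
  have hsol : ∀ j j1 j2, j1 ∈ I j → j2 ∈ I j →
      (b j j1 * ∏ l, (xt l * exp (v l)) ^ y j2 l = b j j2 * ∏ l, (xt l * exp (v l)) ^ y j1 l ↔
        v ⬝ᵥ (fun l => (y j2 l : ℝ) - (y j1 l : ℝ)) = 0) := by
    intro j j1 j2 h1 h2
    have hne : b j j1 * ∏ l, xt l ^ y j2 l ≠ 0 :=
      mul_ne_zero ((hsupp j j1).mpr h1) (Finset.prod_pos fun l _ => pow_pos (hxt l) _).ne'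
    rw [prod_mul_exp_pow, prod_mul_exp_pow, mul_mul_exp_eq_iff (hxtsol j j1 j2 h1 h2) hne,
      ← sub_eq_zero, ← dotProduct_sub]
    rfl
  have horbit : (∃ t : Fin w → ℝ, (∀ ℓ, 0 < t ℓ) ∧
      ∀ i, xt i * exp (v i) = xt i * ∏ ℓ, t ℓ ^ A ℓ i) ↔ ∃ c, c ᵥ* A.map Int.cast = v := by
    simp only [mul_right_inj' (hxt _).ne']
    exact exists_pos_prod_zpow_eq_exp_iff A v
  rw [horbit, exists_vecMul_eq_iff_of_ker_eq_span _ hkerA]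
  constructor
  · rintro h _ ⟨j, j1, j2, h1, h2, rfl⟩
    exact (hsol j j1 j2 h1 h2).mp (h j j1 j2 h1 h2)
  · exact fun h j j1 j2 h1 h2 => (hsol j j1 j2 h1 h2).mpr (h _ ⟨j, j1, j2, h1, h2, rfl⟩)

/-- Given a positive solution x̃ of the binomial system and an
integer matrix A of rank w whose real kernel is the span of the exponent
differences, the positive solutions are exactly the monomial orbit
x = (x̃_1 t^{A_1}, ..., x̃_s t^{A_s}), t ∈ ℝ^w_{>0}. -/
theorem stmt7 (s m d w : ℕ) (y : Fin m → Fin s → ℕ)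
    (I : Fin d → Finset (Fin m))
    (hNonempty : ∀ j, (I j).Nonempty)
    (hDisj : ∀ j j', j ≠ j' → Disjoint (I j) (I j'))
    (hCover : ∀ i : Fin m, ∃ j, i ∈ I j)
    (b : Fin d → Fin m → ℝ)
    (hsupp : ∀ j i, b j i ≠ 0 ↔ i ∈ I j)
    (hsign : ∀ j, ∀ j1 ∈ I j, ∀ j2 ∈ I j, 0 < b j j1 * b j j2)
    (A : Matrix (Fin w) (Fin s) ℤ)
    (hrank : (A.map (fun a : ℤ => (a : ℝ))).rank = w)
    (hkerA : ∀ v : Fin s → ℝ,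
      (A.map (fun a : ℤ => (a : ℝ))).mulVec v = 0 ↔
      v ∈ Submodule.span ℝ { u : Fin s → ℝ | ∃ j j1 j2,
        j1 ∈ I j ∧ j2 ∈ I j ∧ u = fun l => (y j2 l : ℝ) - (y j1 l : ℝ) })
    (xt : Fin s → ℝ) (hxt : ∀ i, 0 < xt i)
    (hxtsol : ∀ j j1 j2, j1 ∈ I j → j2 ∈ I j →
      b j j1 * ∏ l : Fin s, xt l ^ y j2 l = b j j2 * ∏ l : Fin s, xt l ^ y j1 l) :
    ∀ x : Fin s → ℝ, (∀ i, 0 < x i) →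
      ((∀ j j1 j2, j1 ∈ I j → j2 ∈ I j →
          b j j1 * ∏ l : Fin s, x l ^ y j2 l
            = b j j2 * ∏ l : Fin s, x l ^ y j1 l) ↔
        ∃ t : Fin w → ℝ, (∀ ℓ, 0 < t ℓ) ∧
          ∀ i, x i = xt i * ∏ ℓ : Fin w, t ℓ ^ (A ℓ i)) :=
  stmt7_general s m d w y I b hsupp A hkerA xt hxt hxtsol
end

section
/- Any two positive solutions x^1, x^2 of the binomial system b^j_{j1} x^{y_{j2}} = b^j_{j2} x^{y_{j1}} (j1,j2 ∈ I_j, 1 ≤ j ≤ d) satisfy ln x^2 − ln x^1 ∈ span{ y_{j2} − y_{j1} : j1,j2 ∈ I_j, 1 ≤ j ≤ d }^⊥. -/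
/-!
Dividing the `j1, j2` equations of the two solutions eliminates the coefficients (`b^j_{j1} ≠ 0`),
leaving `x₂^{y_{j2}} x₁^{y_{j1}} = x₁^{y_{j2}} x₂^{y_{j1}}`. Taking logarithms
turns this into `⟨ln x₂ - ln x₁, y_{j2} - y_{j1}⟩ = 0`, and orthogonality to a set passes to its span.
-/

open Matrix

theorem Matrix.dotProduct_eq_zero_of_mem_span_s9 {ι R : Type*} [Fintype ι] [CommSemiring R]
    {v u : ι → R} {S : Set (ι → R)} (hS : ∀ w ∈ S, v ⬝ᵥ w = 0)
    (hu : u ∈ Submodule.span R S) : v ⬝ᵥ u = 0 := by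
  induction hu using Submodule.span_induction with
  | mem w hw => exact hS w hw
  | zero => exact dotProduct_zero v
  | add w w' _ _ hw hw' => rw [dotProduct_add, hw, hw', add_zero]
  | smul c w _ hw => rw [dotProduct_smul, hw, smul_zero]

theorem mul_eq_mul_of_eq_mul_of_eq_mul {M : Type*} [CommMonoidWithZero M] [IsLeftCancelMulZero M]
    {c₁ c₂ p₁ p₂ q₁ q₂ : M} (hc₁ : c₁ ≠ 0)
    (hp : c₁ * p₂ = c₂ * p₁) (hq : c₁ * q₂ = c₂ * q₁) : q₂ * p₁ = p₂ * q₁ := by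
  apply mul_left_cancel₀ hc₁
  calc c₁ * (q₂ * p₁) = c₂ * q₁ * p₁ := by rw [← hq, mul_assoc]
    _ = c₁ * p₂ * q₁ := by rw [hp, mul_right_comm]
    _ = c₁ * (p₂ * q₁) := mul_assoc _ _ _

theorem Real.log_prod_pow {ι : Type*} [Fintype ι] {x : ι → ℝ} (hx : ∀ l, 0 < x l) (a : ι → ℕ) :
    Real.log (∏ l, x l ^ a l) = ∑ l, (a l : ℝ) * Real.log (x l) := by
  rw [Real.log_prod fun l _ => pow_ne_zero _ (hx l).ne']
  simp only [Real.log_pow]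

theorem dotProduct_log_sub_log_eq_zero {ι : Type*} [Fintype ι] {x₁ x₂ : ι → ℝ}
    (hx₁ : ∀ l, 0 < x₁ l) (hx₂ : ∀ l, 0 < x₂ l) {a₁ a₂ : ι → ℕ}
    (h : (∏ l, x₂ l ^ a₂ l) * ∏ l, x₁ l ^ a₁ l = (∏ l, x₁ l ^ a₂ l) * ∏ l, x₂ l ^ a₁ l) :
    (fun l => Real.log (x₂ l) - Real.log (x₁ l)) ⬝ᵥ (fun l => (a₂ l : ℝ) - a₁ l) = 0 := by
  have hpos : ∀ {x : ι → ℝ}, (∀ l, 0 < x l) → ∀ a : ι → ℕ, (∏ l, x l ^ a l) ≠ 0 :=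
    fun hx a => (Finset.prod_pos fun l _ => pow_pos (hx l) _).ne'
  have hlog := congrArg Real.log h
  rw [Real.log_mul (hpos hx₂ a₂) (hpos hx₁ a₁), Real.log_mul (hpos hx₁ a₂) (hpos hx₂ a₁),
    Real.log_prod_pow hx₂, Real.log_prod_pow hx₁, Real.log_prod_pow hx₁,
    Real.log_prod_pow hx₂] at hlog
  rw [← sub_eq_zero] at hlog
  rw [← hlog, ← Finset.sum_add_distrib, ← Finset.sum_add_distrib, ← Finset.sum_sub_distrib]
  exact Finset.sum_congr rfl fun l _ => by ring

theorem stmt9_general (s m d : ℕ) (y : Fin m → Fin s → ℕ)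
    (I : Fin d → Finset (Fin m))
    (b : Fin d → Fin m → ℝ)
    (hsupp : ∀ j i, b j i ≠ 0 ↔ i ∈ I j)
    (x1 x2 : Fin s → ℝ) (hx1 : ∀ l, 0 < x1 l) (hx2 : ∀ l, 0 < x2 l)
    (hsol1 : ∀ j j1 j2, j1 ∈ I j → j2 ∈ I j →
      b j j1 * ∏ l : Fin s, x1 l ^ y j2 l = b j j2 * ∏ l : Fin s, x1 l ^ y j1 l)
    (hsol2 : ∀ j j1 j2, j1 ∈ I j → j2 ∈ I j →
      b j j1 * ∏ l : Fin s, x2 l ^ y j2 l = b j j2 * ∏ l : Fin s, x2 l ^ y j1 l) :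
    ∀ u : Fin s → ℝ,
      u ∈ Submodule.span ℝ { u : Fin s → ℝ | ∃ j j1 j2,
        j1 ∈ I j ∧ j2 ∈ I j ∧ u = fun l => (y j2 l : ℝ) - (y j1 l : ℝ) } →
      (∑ l : Fin s, (Real.log (x2 l) - Real.log (x1 l)) * u l) = 0 := by
  intro u hu
  refine dotProduct_eq_zero_of_mem_span_s9 ?_ hu
  rintro _ ⟨j, j1, j2, h1, h2, rfl⟩
  exact dotProduct_log_sub_log_eq_zero hx1 hx2 <| mul_eq_mul_of_eq_mul_of_eq_mul
    ((hsupp j j1).2 h1) (hsol1 j j1 j2 h1 h2) (hsol2 j j1 j2 h1 h2)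

/-- Any two positive solutions x^1, x^2 of the binomial system
satisfy ln x^2 − ln x^1 ∈ (span of the exponent differences)^⊥. -/
theorem stmt9 (s m d : ℕ) (y : Fin m → Fin s → ℕ)
    (I : Fin d → Finset (Fin m))
    (hNonempty : ∀ j, (I j).Nonempty)
    (hDisj : ∀ j j', j ≠ j' → Disjoint (I j) (I j'))
    (hCover : ∀ i : Fin m, ∃ j, i ∈ I j)
    (b : Fin d → Fin m → ℝ)
    (hsupp : ∀ j i, b j i ≠ 0 ↔ i ∈ I j)
    (x1 x2 : Fin s → ℝ) (hx1 : ∀ l, 0 < x1 l) (hx2 : ∀ l, 0 < x2 l)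
    (hsol1 : ∀ j j1 j2, j1 ∈ I j → j2 ∈ I j →
      b j j1 * ∏ l : Fin s, x1 l ^ y j2 l = b j j2 * ∏ l : Fin s, x1 l ^ y j1 l)
    (hsol2 : ∀ j j1 j2, j1 ∈ I j → j2 ∈ I j →
      b j j1 * ∏ l : Fin s, x2 l ^ y j2 l = b j j2 * ∏ l : Fin s, x2 l ^ y j1 l) :
    ∀ u : Fin s → ℝ,
      u ∈ Submodule.span ℝ { u : Fin s → ℝ | ∃ j j1 j2,
        j1 ∈ I j ∧ j2 ∈ I j ∧ u = fun l => (y j2 l : ℝ) - (y j1 l : ℝ) } →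
      (∑ l : Fin s, (Real.log (x2 l) - Real.log (x1 l)) * u l) = 0 :=
  stmt9_general s m d y I b hsupp x1 x2 hx1 hx2 hsol1 hsol2
end

section
/- Let N ∈ ℝ^{s×r} be the stoichiometric matrix of a reaction network, φ(x) the vector of educt monomials, and M a non-negative s.t. its columns generate the cone ker(N) ∩ ℝ^r_{≥0}. A positive vector x ∈ ℝ^s_{>0} is a steady state for the system defined by rate constant vector k ∈ ℝ^r_{>0} (i.e., N·diag(k)·φ(x) = 0) if and only if there exists λ ∈ ℝ^p_{≥0} such that k = diag(φ(x))^{−1}·M·λ and M·λ ∈ ℝ^r_{>0}. -/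
/-!
The flux vector `v i = k i * φ(x) i` is strictly positive, so `x` is a steady state iff `v` lies
in `ker N ∩ ℝ^r_{≥0}`, i.e. `v = M λ` with `λ ≥ 0`; dividing by `φ(x) > 0` turns this into the
formula for `k`, and `M λ = v > 0`.
-/

open Matrix

theorem Matrix.mulVec_eq_zero_iff_exists_nonneg_of_pos {m n ι : Type*} [Fintype n] [Fintype ι]
    {N : Matrix m n ℝ} {M : Matrix n ι ℝ}
    (hcone : ∀ v : n → ℝ,
      (N *ᵥ v = 0 ∧ ∀ i, 0 ≤ v i) ↔ ∃ lam : ι → ℝ, (∀ j, 0 ≤ lam j) ∧ v = M *ᵥ lam)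
    {v : n → ℝ} (hv : ∀ i, 0 < v i) :
    N *ᵥ v = 0 ↔ ∃ lam : ι → ℝ, (∀ j, 0 ≤ lam j) ∧ v = M *ᵥ lam := by
  rw [← hcone]
  exact (and_iff_left fun i => (hv i).le).symm

theorem stmt14_general (s r p : ℕ) (N : Matrix (Fin s) (Fin r) ℝ)
    (yt : Fin r → Fin s → ℕ)
    (M : Matrix (Fin r) (Fin p) ℝ)
    (hcone : ∀ v : Fin r → ℝ,
      (N.mulVec v = 0 ∧ ∀ i, 0 ≤ v i) ↔
      ∃ lam : Fin p → ℝ, (∀ i, 0 ≤ lam i) ∧ v = M.mulVec lam)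
    (x : Fin s → ℝ) (hx : ∀ l, 0 < x l)
    (k : Fin r → ℝ) (hk : ∀ i, 0 < k i) :
    N.mulVec (fun i => k i * ∏ l : Fin s, x l ^ yt i l) = 0 ↔
    ∃ lam : Fin p → ℝ, (∀ i, 0 ≤ lam i) ∧
      (∀ i, k i = (∏ l : Fin s, x l ^ yt i l)⁻¹ * M.mulVec lam i) ∧
      (∀ i, 0 < M.mulVec lam i) := by
  set φ : Fin r → ℝ := fun i => ∏ l : Fin s, x l ^ yt i l
  have hφ : ∀ i, 0 < φ i := fun i => Finset.prod_pos fun l _ => pow_pos (hx l) _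
  have hflux : ∀ i, 0 < k i * φ i := fun i => mul_pos (hk i) (hφ i)
  have hrate : ∀ i w, k i * φ i = w ↔ k i = (φ i)⁻¹ * w := fun i w => by
    rw [eq_inv_mul_iff_mul_eq₀ (hφ i).ne', mul_comm]
  rw [mulVec_eq_zero_iff_exists_nonneg_of_pos hcone hflux]
  refine exists_congr fun lam => and_congr_right fun _ => ?_
  rw [funext_iff]
  exact ⟨fun h => ⟨fun i => (hrate i _).1 (h i), fun i => h i ▸ hflux i⟩,
    fun h i => (hrate i _).2 (h.1 i)⟩

/-- x > 0 is a steady state of N·diag(k)·φ(x) = 0 iff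
k = diag(φ(x))⁻¹·M·λ for some λ ≥ 0 with M·λ > 0, where the columns of M
generate the cone ker(N) ∩ ℝ^r_{≥0}. -/
theorem stmt14 (s r p : ℕ) (N : Matrix (Fin s) (Fin r) ℝ)
    (yt : Fin r → Fin s → ℕ)
    (M : Matrix (Fin r) (Fin p) ℝ) (hMnonneg : ∀ i j, 0 ≤ M i j)
    (hcone : ∀ v : Fin r → ℝ,
      (N.mulVec v = 0 ∧ ∀ i, 0 ≤ v i) ↔
      ∃ lam : Fin p → ℝ, (∀ i, 0 ≤ lam i) ∧ v = M.mulVec lam)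
    (x : Fin s → ℝ) (hx : ∀ l, 0 < x l)
    (k : Fin r → ℝ) (hk : ∀ i, 0 < k i) :
    N.mulVec (fun i => k i * ∏ l : Fin s, x l ^ yt i l) = 0 ↔
    ∃ lam : Fin p → ℝ, (∀ i, 0 ≤ lam i) ∧
      (∀ i, k i = (∏ l : Fin s, x l ^ yt i l)⁻¹ * M.mulVec lam i) ∧
      (∀ i, 0 < M.mulVec lam i) :=
  stmt14_general s r p N yt M hcone x hx k hk
end
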